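/- The presented group K₂ = ⟨m, b ∣ [m, b²] = 1, [m², b] = 1⟩ is not abelian. -/

import Mathlib

open scoped commutatorElement

/-- The relators of `K₂ = ⟨m, b ∣ [m, b²] = 1, [m², b] = 1⟩`, with generators
`m = 0`, `b = 1`. -/
def relsK2 : Set (FreeGroup (Fin 2)) :=
  let m : FreeGroup (Fin 2) := FreeGroup.of 0
  let b : FreeGroup (Fin 2) := FreeGroup.of 1
  { ⁅m, b ^ 2⁆, ⁅m ^ 2, b⁆ }

/-- `K₂ = ⟨m, b ∣ [m, b²] = 1, [m², b] = 1⟩`. -/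
abbrev K2 := PresentedGroup relsK2

/-!
`K₂` maps to any group containing elements `x, y` such that `x` commutes with `y²` and `x²`
commutes with `y`, via `m ↦ x`, `b ↦ y`. In the quaternion group `Q₈` all squares are central,
while `i = a 1` and `j = xa 0` do not commute, so the generators of `K₂` do not commute either.
-/

namespace K2

variable {G : Type*} [Group G]

theorem lift_rels_eq_one {x y : G} (hxy : Commute x (y ^ 2)) (hyx : Commute (x ^ 2) y) :
    ∀ r ∈ relsK2, FreeGroup.lift ![x, y] r = 1 := by
  rintro r (rfl | rfl) <;>
    simpa only [map_commutatorElement, map_pow, FreeGroup.lift_apply_of,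
      commutatorElement_eq_one_iff_commute]

def lift {x y : G} (hxy : Commute x (y ^ 2)) (hyx : Commute (x ^ 2) y) : K2 →* G :=
  PresentedGroup.toGroup (lift_rels_eq_one hxy hyx)

theorem not_commute_of_not_commute {x y : G} (hxy : Commute x (y ^ 2))
    (hyx : Commute (x ^ 2) y) (h : ¬Commute x y) :
    ¬Commute (PresentedGroup.of 0 : K2) (PresentedGroup.of 1) := fun hK =>
  h (by simpa [lift, PresentedGroup.toGroup.of] using hK.map (lift hxy hyx))

end K2

theorem QuaternionGroup.commute_sq_two (g h : QuaternionGroup 2) : Commute (g ^ 2) h := by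
  revert g h
  unfold Commute SemiconjBy
  decide

open QuaternionGroup in
/-- `K₂` is not abelian. -/
theorem K2_not_abelian : ∃ x y : K2, x * y ≠ y * x := by
  have hij : ¬Commute (a 1 : QuaternionGroup 2) (xa 0) := by
    unfold Commute SemiconjBy
    decide
  exact ⟨_, _, K2.not_commute_of_not_commute (commute_sq_two _ _).symm (commute_sq_two _ _) hij⟩
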